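/- arXiv:2311.12232 — 3 statements merged into one kernel-verified Lean document; each statement's English description precedes it below -/
import Mathlib

section
/- Let A, B : ℝ → ℝ be continuous and 1-periodic with A(y) > 0 for all y, and let F : ℝ → ℝ be continuous and 1-periodic. Suppose u, û : ℝ → ℝ are continuously differentiable 1-periodic functions and k₀, k̂₀ are real numbers satisfying −A(y)(u'(y))² − B(y)u'(y) − F(y) + k₀ = 0 and −A(y)(û'(y))² − B(y)û'(y) − F(y) + k̂₀ = 0 for all y. Then k₀ = k̂₀. -/
/-!
At a maximum of `u - û`, which exists because `u - û` is continuous and periodic, the two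
derivatives agree; evaluating both equations at that point leaves only `k₀ = k̂₀`.
-/

namespace Function.Periodic

theorem exists_forall_le_of_continuous {α : Type*} [TopologicalSpace α] [LinearOrder α]
    [ClosedIciTopology α] {f : ℝ → α} {c : ℝ} (hp : Periodic f c) (hc : c ≠ 0)
    (hf : Continuous f) : ∃ x, ∀ y, f y ≤ f x := by
  obtain ⟨_, ⟨x, rfl⟩, hmax⟩ :=
    (hp.compact_of_continuous hc hf).exists_isGreatest (Set.range_nonempty f)
  exact ⟨x, fun y => hmax ⟨y, rfl⟩⟩

theorem exists_deriv_eq_zero {f : ℝ → ℝ} {c : ℝ} (hp : Periodic f c) (hc : c ≠ 0)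
    (hf : Differentiable ℝ f) : ∃ x, deriv f x = 0 := by
  obtain ⟨x, hmax⟩ := hp.exists_forall_le_of_continuous hc hf.continuous
  exact ⟨x, IsLocalMax.deriv_eq_zero (Filter.Eventually.of_forall hmax)⟩

end Function.Periodic

theorem stmt7_general (A B F : ℝ → ℝ)
    (u uhat : ℝ → ℝ) (hu : ContDiff ℝ 1 u) (huhat : ContDiff ℝ 1 uhat)
    (huper : ∀ y, u (y + 1) = u y) (huhatper : ∀ y, uhat (y + 1) = uhat y)
    (k₀ khat₀ : ℝ)
    (heq : ∀ y, -A y * (deriv u y) ^ 2 - B y * deriv u y - F y + k₀ = 0)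
    (heqhat : ∀ y, -A y * (deriv uhat y) ^ 2 - B y * deriv uhat y - F y + khat₀ = 0) :
    k₀ = khat₀ := by
  have hdu : Differentiable ℝ u := hu.differentiable one_ne_zero
  have hduhat : Differentiable ℝ uhat := huhat.differentiable one_ne_zero
  obtain ⟨c, hc⟩ := (Function.Periodic.sub huper huhatper).exists_deriv_eq_zero one_ne_zero
    (hdu.sub hduhat)
  have hderiv : deriv u c = deriv uhat c := by
    rw [deriv_sub (hdu c) (hduhat c)] at hc
    linarith
  have h := heq c
  rw [hderiv] at h
  linarith [heqhat c]

theorem stmt7 (A B F : ℝ → ℝ) (hA : Continuous A) (hB : Continuous B) (hF : Continuous F)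
    (hApos : ∀ y, 0 < A y)
    (hAper : ∀ y, A (y + 1) = A y) (hBper : ∀ y, B (y + 1) = B y)
    (hFper : ∀ y, F (y + 1) = F y)
    (u uhat : ℝ → ℝ) (hu : ContDiff ℝ 1 u) (huhat : ContDiff ℝ 1 uhat)
    (huper : ∀ y, u (y + 1) = u y) (huhatper : ∀ y, uhat (y + 1) = uhat y)
    (k₀ khat₀ : ℝ)
    (heq : ∀ y, -A y * (deriv u y) ^ 2 - B y * deriv u y - F y + k₀ = 0)
    (heqhat : ∀ y, -A y * (deriv uhat y) ^ 2 - B y * deriv uhat y - F y + khat₀ = 0) :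
    k₀ = khat₀ :=
  stmt7_general A B F u uhat hu huhat huper huhatper k₀ khat₀ heq heqhat
end

section
/- Let n ≥ 1 and let u : ℝⁿ → ℝ satisfy the Hölder estimate |u(y') − u(y'')| ≤ L·√(‖y' − y''‖) for all y', y''. Fix y ∈ ℝⁿ. Then for every integer n₀ ≥ 1 there exist a point y* with ‖y* − y‖ ≤ 1/(2n₀) and a constant b ∈ ℝ such that the C² function φ(y') := b − 4·L·n₀^{3/2}·‖y' − y‖² satisfies φ(y*) = u(y*) and φ(y') ≤ u(y') for all y' with ‖y' − y‖ ≤ 1/n₀. In particular, u − φ has a local minimum at y* and ‖y* − y‖ → 0 as n₀ → ∞. -/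
/-! Minimise `u + C‖· - y‖²` over the closed ball of radius `1 / (2n₀)` about `y`. Off that ball the
penalty `C‖· - y‖²` exceeds `C / (4n₀²) = L / √n₀`, which by the Hölder bound dominates the drop of `u`
below `u y` on the ball of radius `1 / n₀`; so the minimiser is also a minimiser on the larger ball,
hence interior to it, and `b - C‖· - y‖²` with `b` the minimum value touches `u` from below there. -/

open Metric

section HolderSqrt

variable {E : Type*} [NormedAddCommGroup E] {u : E → ℝ} {L : ℝ}

theorem continuous_of_abs_sub_le_mul_sqrt_norm
    (hu : ∀ x x' : E, |u x - u x'| ≤ L * √‖x - x'‖) : Continuous u := by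
  refine continuous_iff_continuousAt.2 fun x => tendsto_iff_dist_tendsto_zero.2 ?_
  have hbound : Filter.Tendsto (fun x' : E => L * √‖x' - x‖) (nhds x) (nhds 0) := by
    simpa using ((continuous_id.sub (continuous_const (y := x))).norm.sqrt.const_mul L).tendsto x
  exact squeeze_zero (fun _ => dist_nonneg) (fun x' => (Real.dist_eq _ _).trans_le (hu x' x)) hbound

theorem exists_mem_closedBall_isMinOn_add_mul_sq_norm_sub [ProperSpace E]
    (hu : ∀ x x' : E, |u x - u x'| ≤ L * √‖x - x'‖) (y : E) {r R C : ℝ} (hr : 0 < r)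
    (hR : L * √R ≤ C * r ^ 2) :
    ∃ ystar ∈ closedBall y r,
      IsMinOn (fun x => u x + C * ‖x - y‖ ^ 2) (closedBall y R) ystar := by
  set g : E → ℝ := fun x => u x + C * ‖x - y‖ ^ 2
  have hg : Continuous g := (continuous_of_abs_sub_le_mul_sqrt_norm hu).add
    (continuous_const.mul ((continuous_id.sub continuous_const).norm.pow 2))
  obtain ⟨ystar, hystar, hmin⟩ := (isCompact_closedBall y r).exists_isMinOn
    ⟨y, mem_closedBall_self hr.le⟩ hg.continuousOn
  refine ⟨ystar, hystar, fun x hxR => ?_⟩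
  rw [mem_closedBall, dist_eq_norm] at hxR
  rcases le_or_gt ‖x - y‖ r with hxr | hxr
  · exact hmin (by rwa [mem_closedBall, dist_eq_norm])
  have hux : u y - u x ≤ L * √‖x - y‖ := by
    simpa only [norm_sub_rev y x] using (le_abs_self _).trans (hu y x)
  have hL : 0 ≤ L := nonneg_of_mul_nonneg_left ((abs_nonneg _).trans (hu x y))
    (Real.sqrt_pos.2 (hr.trans hxr))
  have hC : 0 ≤ C := nonneg_of_mul_nonneg_left ((mul_nonneg hL (Real.sqrt_nonneg R)).trans hR)
    (by positivity)
  calc g ystar ≤ g y := hmin (mem_closedBall_self hr.le)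
    _ = u y := by simp [g]
    _ ≤ u x + L * √R := by nlinarith [Real.sqrt_le_sqrt hxR]
    _ ≤ u x + C * r ^ 2 := by linarith
    _ ≤ g x := by simp only [g]; gcongr

end HolderSqrt

theorem mul_sqrt_one_div_eq_rpow_mul_sq_one_div_two_mul (L : ℝ) {x : ℝ} (hx : 0 < x) :
    L * √(1 / x) = 4 * L * x ^ ((3 : ℝ) / 2) * (1 / (2 * x)) ^ 2 := by
  have hs : √x ^ 2 = x := Real.sq_sqrt hx.le
  have hpow : x ^ ((3 : ℝ) / 2) = x * √x := by
    rw [show (3 : ℝ) / 2 = 1 + 1 / 2 by norm_num, Real.rpow_add hx, Real.rpow_one,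
      Real.sqrt_eq_rpow]
  have : 0 < √x := Real.sqrt_pos.2 hx
  rw [hpow, one_div, Real.sqrt_inv]
  field_simp
  linear_combination (-4 * L) * hs

theorem stmt8_general (n : ℕ) (L : ℝ)
    (u : EuclideanSpace ℝ (Fin n) → ℝ)
    (hu : ∀ y' y'' : EuclideanSpace ℝ (Fin n), |u y' - u y''| ≤ L * Real.sqrt ‖y' - y''‖)
    (y : EuclideanSpace ℝ (Fin n)) :
    ∀ n₀ : ℕ, 1 ≤ n₀ →
      ∃ (ystar : EuclideanSpace ℝ (Fin n)) (b : ℝ),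
        ‖ystar - y‖ ≤ 1 / (2 * n₀) ∧
        b - 4 * L * (n₀ : ℝ) ^ ((3:ℝ)/2) * ‖ystar - y‖ ^ 2 = u ystar ∧
        (∀ y' : EuclideanSpace ℝ (Fin n), ‖y' - y‖ ≤ 1 / n₀ →
          b - 4 * L * (n₀ : ℝ) ^ ((3:ℝ)/2) * ‖y' - y‖ ^ 2 ≤ u y') ∧
        IsLocalMin (fun y' => u y' - (b - 4 * L * (n₀ : ℝ) ^ ((3:ℝ)/2) * ‖y' - y‖ ^ 2)) ystar := by
  intro n₀ hn₀
  have hn₀pos : (0 : ℝ) < n₀ := by exact_mod_cast hn₀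
  set C := 4 * L * (n₀ : ℝ) ^ ((3:ℝ)/2)
  obtain ⟨ystar, hystar, hmin⟩ := exists_mem_closedBall_isMinOn_add_mul_sq_norm_sub hu y
    (r := 1 / (2 * n₀)) (R := 1 / n₀) (C := C) (by positivity)
    (mul_sqrt_one_div_eq_rpow_mul_sq_one_div_two_mul L hn₀pos).le
  rw [mem_closedBall, dist_eq_norm] at hystar
  have hball : closedBall y (1 / n₀) ∈ nhds ystar := by
    refine closedBall_mem_nhds_of_mem (mem_ball.2 ?_)
    rw [dist_eq_norm]
    exact hystar.trans_lt (by gcongr; linarith)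
  refine ⟨ystar, u ystar + C * ‖ystar - y‖ ^ 2, hystar, by ring, fun y' hy' => ?_,
    Filter.Eventually.mono (hmin.isLocalMin hball) fun y' h => by simp only at h ⊢; linarith⟩
  have : u ystar + C * ‖ystar - y‖ ^ 2 ≤ u y' + C * ‖y' - y‖ ^ 2 :=
    hmin (by rwa [mem_closedBall, dist_eq_norm])
  linarith

theorem stmt8 (n : ℕ) (hn : 1 ≤ n) (L : ℝ)
    (u : EuclideanSpace ℝ (Fin n) → ℝ)
    (hu : ∀ y' y'' : EuclideanSpace ℝ (Fin n), |u y' - u y''| ≤ L * Real.sqrt ‖y' - y''‖)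
    (y : EuclideanSpace ℝ (Fin n)) :
    ∀ n₀ : ℕ, 1 ≤ n₀ →
      ∃ (ystar : EuclideanSpace ℝ (Fin n)) (b : ℝ),
        ‖ystar - y‖ ≤ 1 / (2 * n₀) ∧
        b - 4 * L * (n₀ : ℝ) ^ ((3:ℝ)/2) * ‖ystar - y‖ ^ 2 = u ystar ∧
        (∀ y' : EuclideanSpace ℝ (Fin n), ‖y' - y‖ ≤ 1 / n₀ →
          b - 4 * L * (n₀ : ℝ) ^ ((3:ℝ)/2) * ‖y' - y‖ ^ 2 ≤ u y') ∧
        IsLocalMin (fun y' => u y' - (b - 4 * L * (n₀ : ℝ) ^ ((3:ℝ)/2) * ‖y' - y‖ ^ 2)) ystar :=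
  stmt8_general n L u hu y
end

section
/- Let Y ⊆ ℝⁿ be an open set, A : Y → M_n(ℝ) continuous taking positive semidefinite values, K : Y → ℝ continuous, and k₀ ∈ ℝ. Suppose u : Y → ℝ is continuous and is a viscosity supersolution of −∇u·(A∇u) − K(y) + k₀ = 0 on Y, in the sense that whenever φ is C² near a point y* ∈ Y and u − φ has a local minimum at y*, then −∇φ(y*)·(A(y*)∇φ(y*)) − K(y*) + k₀ ≥ 0. If additionally u satisfies a global ½-Hölder bound |u(y')−u(y'')| ≤ L√(‖y'−y''‖), then k₀ ≥ K(y) for every y ∈ Y. -/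
/-! Fix `y ∈ Y`. Penalizing `u` by `C ‖z - y‖²` with `C r² > L √r`, the minimum of the
penalized function over a small closed ball cannot lie on the boundary sphere, since the Hölder
bound caps how much `u` can drop there. So `φ z = -C ‖z - y‖²` touches `u` from below at an
interior point `y'`, where the supersolution inequality and `∇φ · A ∇φ ≥ 0` give `K y' ≤ k₀`.
Such `y'` exist arbitrarily close to `y`, and `K` is continuous at `y`. -/

open Metric

theorem Matrix.PosSemidef.sum_mul_mul_nonneg {ι : Type*} [Fintype ι] {A : Matrix ι ι ℝ}
    (hA : A.PosSemidef) (v : ι → ℝ) : 0 ≤ ∑ i, ∑ j, A i j * v i * v j := by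
  have h := hA.dotProduct_mulVec_nonneg v
  simp only [dotProduct, Matrix.mulVec, star_trivial, Finset.mul_sum] at h
  exact h.trans_eq (Finset.sum_congr rfl fun i _ => Finset.sum_congr rfl fun j _ => by ring)

theorem exists_mem_ball_isLocalMin_add_mul_dist_sq {X : Type*} [PseudoMetricSpace X]
    [ProperSpace X] {u : X → ℝ} {y : X} {r L C : ℝ} (hr : 0 < r)
    (hu : ContinuousOn u (closedBall y r))
    (hHol : ∀ z ∈ closedBall y r, u y - u z ≤ L * √(dist z y))
    (hC : L * √r < C * r ^ 2) :
    ∃ y' ∈ ball y r, IsLocalMin (fun z => u z + C * dist z y ^ 2) y' := by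
  have hcont : ContinuousOn (fun z => u z + C * dist z y ^ 2) (closedBall y r) :=
    hu.add (by fun_prop)
  obtain ⟨y', hy'r, hmin⟩ :=
    (isCompact_closedBall y r).exists_isMinOn ⟨y, mem_closedBall_self hr.le⟩ hcont
  have hy'_lt : dist y' y < r := by
    refine (mem_closedBall.mp hy'r).lt_of_ne fun hsphere => ?_
    have hle : u y' + C * dist y' y ^ 2 ≤ u y + C * dist y y ^ 2 :=
      hmin (mem_closedBall_self hr.le)
    have := hHol y' hy'r
    rw [hsphere, dist_self] at *
    linarith
  exact ⟨y', hy'_lt, Filter.mem_of_superset (isOpen_ball.mem_nhds hy'_lt)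
    fun z hz => hmin (ball_subset_closedBall hz)⟩

theorem stmt9_general (n : ℕ) (Y : Set (EuclideanSpace ℝ (Fin n))) (hY : IsOpen Y)
    (A : EuclideanSpace ℝ (Fin n) → Matrix (Fin n) (Fin n) ℝ)
    (hApsd : ∀ y ∈ Y, (A y).PosSemidef)
    (K : EuclideanSpace ℝ (Fin n) → ℝ) (hK : ContinuousOn K Y)
    (k₀ : ℝ) (u : EuclideanSpace ℝ (Fin n) → ℝ) (hu : ContinuousOn u Y)
    (L : ℝ)
    (hHol : ∀ y' ∈ Y, ∀ y'' ∈ Y, |u y' - u y''| ≤ L * Real.sqrt ‖y' - y''‖)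
    (hvisc : ∀ ystar ∈ Y, ∀ φ : EuclideanSpace ℝ (Fin n) → ℝ,
      ContDiffAt ℝ 2 φ ystar → IsLocalMin (fun y => u y - φ y) ystar →
      -(∑ i, ∑ j, A ystar i j * gradient φ ystar i * gradient φ ystar j)
        - K ystar + k₀ ≥ 0) :
    ∀ y ∈ Y, k₀ ≥ K y := by
  intro y hy
  refine ContinuousWithinAt.closure_le (s := {z ∈ Y | K z ≤ k₀}) ?_
    (hK.continuousAt (hY.mem_nhds hy)).continuousWithinAt continuousWithinAt_const
    fun z hz => hz.2
  refine Metric.mem_closure_iff.mpr fun ε hε => ?_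
  obtain ⟨ρ, hρ, hρY⟩ := nhds_basis_closedBall.mem_iff.mp (hY.mem_nhds hy)
  have hr : 0 < min ε ρ := lt_min hε hρ
  have hball : closedBall y (min ε ρ) ⊆ Y :=
    (closedBall_subset_closedBall (min_le_right _ _)).trans hρY
  set C := (L * √(min ε ρ) + 1) / min ε ρ ^ 2
  obtain ⟨y', hy'r, hmin⟩ := exists_mem_ball_isLocalMin_add_mul_dist_sq (C := C) hr
    (hu.mono hball)
    (fun z hz => by
      rw [dist_comm, dist_eq_norm]
      exact (le_abs_self _).trans (hHol y hy z (hball hz)))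
    (by rw [div_mul_cancel₀ _ (by positivity)]; linarith)
  have hy'Y : y' ∈ Y := hball (ball_subset_closedBall hy'r)
  set φ : EuclideanSpace ℝ (Fin n) → ℝ := fun z => -(C * ‖z - y‖ ^ 2)
  have hφ : ContDiff ℝ 2 φ :=
    (contDiff_const.mul ((contDiff_id.sub contDiff_const).norm_sq ℝ)).neg
  have htouch : IsLocalMin (fun z => u z - φ z) y' := by
    simpa [φ, dist_eq_norm] using hmin
  have hv := hvisc y' hy'Y φ hφ.contDiffAt htouch
  have hq := (hApsd y' hy'Y).sum_mul_mul_nonneg (WithLp.ofLp (gradient φ y'))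
  refine ⟨y', ⟨hy'Y, by linarith⟩, ?_⟩
  rw [dist_comm]
  exact (mem_ball.mp hy'r).trans_le (min_le_left _ _)

theorem stmt9 (n : ℕ) (Y : Set (EuclideanSpace ℝ (Fin n))) (hY : IsOpen Y)
    (A : EuclideanSpace ℝ (Fin n) → Matrix (Fin n) (Fin n) ℝ)
    (hA : ContinuousOn A Y) (hApsd : ∀ y ∈ Y, (A y).PosSemidef)
    (K : EuclideanSpace ℝ (Fin n) → ℝ) (hK : ContinuousOn K Y)
    (k₀ : ℝ) (u : EuclideanSpace ℝ (Fin n) → ℝ) (hu : ContinuousOn u Y)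
    (L : ℝ)
    (hHol : ∀ y' ∈ Y, ∀ y'' ∈ Y, |u y' - u y''| ≤ L * Real.sqrt ‖y' - y''‖)
    (hvisc : ∀ ystar ∈ Y, ∀ φ : EuclideanSpace ℝ (Fin n) → ℝ,
      ContDiffAt ℝ 2 φ ystar → IsLocalMin (fun y => u y - φ y) ystar →
      -(∑ i, ∑ j, A ystar i j * gradient φ ystar i * gradient φ ystar j)
        - K ystar + k₀ ≥ 0) :
    ∀ y ∈ Y, k₀ ≥ K y :=
  stmt9_general n Y hY A hApsd K hK k₀ u hu L hHol hvisc
end
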